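/- Let M ∈ ℝ^{m×n} be partitioned in blocks with top-left s×s block A_M, let G ∈ ℝ^{m×s}, S ∈ ℝ^{s×n} satisfy ‖M − GS‖₂ ≤ e_s, let G_A be the top s rows of G and S_A the first s columns of S. Assume: (1) σ_s(GS) > 0; (2) there is γ ≥ 1 with σ_s(G)·σ_s(S) = σ_s(GS)/γ; (3) there is β ≥ 1 with σ_s(G_A) ≥ σ_s(G)/β and σ_s(S_A) ≥ σ_s(S)/β. Then (σ_s(M) − e_s)/(β²γ) − e_s ≤ σ_s(A_M). -/

import Mathlib

open Matrix

/-- `sv A k` is the `k`-th largest singular value (1-indexed) of the real matrix `A`,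
computed as the `k`-th largest square root of an eigenvalue of `Aᵀ * A`. -/
noncomputable def sv {p q : ℕ} (A : Matrix (Fin p) (Fin q) ℝ) (k : ℕ) : ℝ :=
  if h : q - k < q then
    (fun i : Fin q => Real.sqrt ((Matrix.isHermitian_conjTranspose_mul_self A).eigenvalues i))
      (Tuple.sort (fun i : Fin q =>
        Real.sqrt ((Matrix.isHermitian_conjTranspose_mul_self A).eigenvalues i)) ⟨q - k, h⟩)
  else 0

/-!
Weyl's perturbation inequality `σ_k(X) ≤ σ_k(Y) + ‖X - Y‖₂` gives both
`σ_s(M) - e_s ≤ σ_s(GS)` and `σ_s(G_A S_A) - e_s ≤ σ_s(A_M)`; for the second, `G_A S_A - A_M` is a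
block of `GS - M`, and a submatrix has spectral norm at most that of the whole matrix. For square
factors `σ_s(G_A)σ_s(S_A) ≤ σ_s(G_A S_A)`, while assumptions (2) and (3) give
`σ_s(GS)/(β²γ) = σ_s(G)σ_s(S)/β² ≤ σ_s(G_A)σ_s(S_A)`. Chaining these proves the bound.

All singular value estimates come from the eigenbasis `vᵢ` of `Aᴴ A`, in which
`‖A x‖² = ∑ σᵢ² ⟪vᵢ, x⟫²`.
-/

open scoped RealInnerProductSpace

lemma OrthonormalBasis.inner_eq_zero_of_mem_span {ι E : Type*} [Fintype ι]
    [NormedAddCommGroup E] [InnerProductSpace ℝ E] (b : OrthonormalBasis ι ℝ E) {J : Set ι}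
    {x : E} (hx : x ∈ Submodule.span ℝ (b '' J)) {i : ι} (hi : i ∉ J) : ⟪b i, x⟫ = 0 := by
  refine Submodule.span_induction ?_ (inner_zero_right _) (fun _ _ _ _ h h' => ?_)
    (fun _ _ _ h => ?_) hx
  · rintro _ ⟨j, hj, rfl⟩
    exact b.orthonormal.2 (ne_of_mem_of_not_mem hj hi).symm
  · rw [inner_add_right, h, h', add_zero]
  · rw [real_inner_smul_right, h, mul_zero]

lemma OrthonormalBasis.finrank_span_image_range {ι κ E : Type*} [Fintype ι] [Fintype κ]
    [NormedAddCommGroup E] [InnerProductSpace ℝ E] (b : OrthonormalBasis ι ℝ E) {f : κ → ι}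
    (hf : Function.Injective f) :
    Module.finrank ℝ (Submodule.span ℝ (b '' Set.range f)) = Fintype.card κ := by
  rw [← Set.range_comp, finrank_span_eq_card (b.orthonormal.comp f hf).linearIndependent]

lemma Submodule.exists_mem_inf_ne_zero_of_finrank_lt {K V : Type*} [DivisionRing K]
    [AddCommGroup V] [Module K V] [FiniteDimensional K V] (W U : Submodule K V)
    (h : Module.finrank K V < Module.finrank K W + Module.finrank K U) :
    ∃ x ∈ W ⊓ U, x ≠ 0 := by
  have hsup := Submodule.finrank_le (W ⊔ U)
  have hdim := Submodule.finrank_sup_add_finrank_inf_eq W U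
  exact (Submodule.ne_bot_iff _).1 fun hbot => by
    rw [hbot, finrank_bot] at hdim
    omega

lemma Function.Injective.sum_extend_zero {ι κ M : Type*} [Fintype ι] [Fintype κ]
    [AddCommMonoid M] {f : κ → ι} (hf : Function.Injective f) (v : κ → ℝ) (φ : ι → ℝ → M)
    (hφ : ∀ i, φ i 0 = 0) : ∑ i, φ i (Function.extend f v 0 i) = ∑ j, φ (f j) (v j) := by
  classical
  rw [← Finset.sum_subset (Finset.subset_univ (Finset.univ.map ⟨f, hf⟩)), Finset.sum_map]
  · simp [hf.extend_apply]
  · intro i _ hi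
    rw [Function.extend_apply' _ _ _ (by simpa using hi), Pi.zero_apply, hφ]

lemma EuclideanSpace.norm_comp_le {ι κ : Type*} [Fintype ι] [Fintype κ] {e : κ → ι}
    (he : Function.Injective e) (y : EuclideanSpace ℝ ι) :
    ‖(WithLp.toLp 2 fun j => y (e j) : EuclideanSpace ℝ κ)‖ ≤ ‖y‖ := by
  classical
  rw [EuclideanSpace.norm_eq, EuclideanSpace.norm_eq]
  gcongr
  calc ∑ j, ‖y (e j)‖ ^ 2 = ∑ i ∈ Finset.univ.map ⟨e, he⟩, ‖y i‖ ^ 2 :=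
        (Finset.sum_map Finset.univ ⟨e, he⟩ fun i => ‖y i‖ ^ 2).symm
    _ ≤ ∑ i, ‖y i‖ ^ 2 := Finset.sum_le_univ_sum_of_nonneg fun _ => by positivity

lemma EuclideanSpace.norm_extend_zero {ι κ : Type*} [Fintype ι] [Fintype κ] {f : κ → ι}
    (hf : Function.Injective f) (x : EuclideanSpace ℝ κ) :
    ‖(WithLp.toLp 2 (Function.extend f x 0) : EuclideanSpace ℝ ι)‖ = ‖x‖ := by
  rw [EuclideanSpace.norm_eq, EuclideanSpace.norm_eq,
    ← hf.sum_extend_zero x (fun _ t => ‖t‖ ^ 2) fun _ => by simp]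

lemma Matrix.submatrix_mulVec_eq_mulVec_extend {ι ι' κ κ' : Type*} [Fintype κ] [Fintype κ']
    (A : Matrix ι κ ℝ) (e : ι' → ι) {f : κ' → κ} (hf : Function.Injective f) (x : κ' → ℝ) :
    A.submatrix e f *ᵥ x = fun i => (A *ᵥ Function.extend f x 0) (e i) := by
  ext i
  simp only [mulVec, dotProduct, submatrix_apply]
  exact (hf.sum_extend_zero x (fun j t => A (e i) j * t) fun _ => mul_zero _).symm

lemma sv_eq_of_conjTranspose_mul_self_eq {p p' q : ℕ} {A : Matrix (Fin p) (Fin q) ℝ}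
    {B : Matrix (Fin p') (Fin q) ℝ} (h : Aᴴ * A = Bᴴ * B) (k : ℕ) : sv A k = sv B k := by
  have key : ∀ {H H' : Matrix (Fin q) (Fin q) ℝ} (hH : H.IsHermitian) (hH' : H'.IsHermitian),
      H = H' → hH.eigenvalues = hH'.eigenvalues := by
    rintro _ _ _ _ rfl; rfl
  unfold sv
  rw [key (isHermitian_conjTranspose_mul_self A) (isHermitian_conjTranspose_mul_self B) h]

section SingularValues

variable {p q : ℕ} (A : Matrix (Fin p) (Fin q) ℝ)

noncomputable abbrev rightSingularBasis : OrthonormalBasis (Fin q) ℝ (EuclideanSpace ℝ (Fin q)) :=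
  (isHermitian_conjTranspose_mul_self A).eigenvectorBasis

noncomputable def svUnsorted (i : Fin q) : ℝ :=
  √((isHermitian_conjTranspose_mul_self A).eigenvalues i)

lemma sv_eq_svUnsorted_sort {k : ℕ} (hk : q - k < q) :
    sv A k = svUnsorted A (Tuple.sort (svUnsorted A) ⟨q - k, hk⟩) :=
  dif_pos hk

lemma sv_zero_right : sv A 0 = 0 := dif_neg (by simp)

lemma sv_nonneg (k : ℕ) : 0 ≤ sv A k := by
  unfold sv; split_ifs <;> positivity

lemma sv_neg (k : ℕ) : sv (-A) k = sv A k :=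
  sv_eq_of_conjTranspose_mul_self_eq
    (by rw [conjTranspose_neg, Matrix.neg_mul, Matrix.mul_neg, neg_neg]) k

lemma svUnsorted_nonneg (i : Fin q) : 0 ≤ svUnsorted A i := Real.sqrt_nonneg _

lemma sq_svUnsorted (i : Fin q) :
    svUnsorted A i ^ 2 = (isHermitian_conjTranspose_mul_self A).eigenvalues i :=
  Real.sq_sqrt ((posSemidef_conjTranspose_mul_self A).eigenvalues_nonneg i)

lemma sv_le_svUnsorted_sort {k : ℕ} (hk : q - k < q) {j : Fin q} (hj : q - k ≤ j) :
    sv A k ≤ svUnsorted A (Tuple.sort (svUnsorted A) j) := by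
  rw [sv_eq_svUnsorted_sort A hk]
  exact Tuple.monotone_sort (svUnsorted A) (Fin.le_def.2 hj)

lemma svUnsorted_sort_le_sv {k : ℕ} (hk : q - k < q) {j : Fin q} (hj : j ≤ q - k) :
    svUnsorted A (Tuple.sort (svUnsorted A) j) ≤ sv A k := by
  rw [sv_eq_svUnsorted_sort A hk]
  exact Tuple.monotone_sort (svUnsorted A) (Fin.le_def.2 hj)

lemma svUnsorted_le_sv_one (i : Fin q) : svUnsorted A i ≤ sv A 1 := by
  obtain ⟨j, rfl⟩ := (Tuple.sort (svUnsorted A)).surjective i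
  exact svUnsorted_sort_le_sv A (by have := j.isLt; omega) (Nat.le_sub_one_of_lt j.isLt)

lemma sv_card_le_svUnsorted (i : Fin q) : sv A q ≤ svUnsorted A i := by
  obtain ⟨j, rfl⟩ := (Tuple.sort (svUnsorted A)).surjective i
  exact sv_le_svUnsorted_sort A (by have := j.isLt; omega) (by simp)

lemma inner_rightSingularBasis_toEuclideanLin_conjTranspose_mul_self
    (x : EuclideanSpace ℝ (Fin q)) (i : Fin q) :
    ⟪rightSingularBasis A i, (Aᴴ * A).toEuclideanLin x⟫ =
      svUnsorted A i ^ 2 * ⟪rightSingularBasis A i, x⟫ := by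
  have hH := isHermitian_conjTranspose_mul_self A
  have hb : (Aᴴ * A).toEuclideanLin (rightSingularBasis A i) =
      hH.eigenvalues i • rightSingularBasis A i :=
    congrArg (WithLp.toLp 2) (hH.mulVec_eigenvectorBasis i)
  rw [← isSymmetric_toEuclideanLin_iff.2 hH, hb, real_inner_smul_left, sq_svUnsorted]

lemma norm_toEuclideanLin_sq (x : EuclideanSpace ℝ (Fin q)) :
    ‖A.toEuclideanLin x‖ ^ 2 = ∑ i, svUnsorted A i ^ 2 * ⟪rightSingularBasis A i, x⟫ ^ 2 := by
  rw [← real_inner_self_eq_norm_sq, ← LinearMap.adjoint_inner_right,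
    ← toEuclideanLin_conjTranspose_eq_adjoint, ← LinearMap.comp_apply, ← toLpLin_mul,
    ← (rightSingularBasis A).sum_inner_mul_inner]
  refine Finset.sum_congr rfl fun i _ => ?_
  rw [inner_rightSingularBasis_toEuclideanLin_conjTranspose_mul_self, real_inner_comm]
  ring

lemma norm_toEuclideanLin_le_of_mem_span {J : Set (Fin q)} {x : EuclideanSpace ℝ (Fin q)}
    (hx : x ∈ Submodule.span ℝ (rightSingularBasis A '' J)) {c : ℝ} (hc : 0 ≤ c)
    (hJ : ∀ i ∈ J, svUnsorted A i ≤ c) : ‖A.toEuclideanLin x‖ ≤ c * ‖x‖ := by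
  refine (pow_le_pow_iff_left₀ (norm_nonneg _) (by positivity) two_ne_zero).1 ?_
  rw [norm_toEuclideanLin_sq, mul_pow, ← (rightSingularBasis A).sum_sq_inner_right x,
    Finset.mul_sum]
  refine Finset.sum_le_sum fun i _ => ?_
  by_cases hi : i ∈ J
  · gcongr
    exacts [svUnsorted_nonneg A i, hJ i hi]
  · simp [(rightSingularBasis A).inner_eq_zero_of_mem_span hx hi]

lemma le_norm_toEuclideanLin_of_mem_span {J : Set (Fin q)} {x : EuclideanSpace ℝ (Fin q)}
    (hx : x ∈ Submodule.span ℝ (rightSingularBasis A '' J)) {c : ℝ} (hc : 0 ≤ c)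
    (hJ : ∀ i ∈ J, c ≤ svUnsorted A i) : c * ‖x‖ ≤ ‖A.toEuclideanLin x‖ := by
  refine (pow_le_pow_iff_left₀ (by positivity) (norm_nonneg _) two_ne_zero).1 ?_
  rw [norm_toEuclideanLin_sq, mul_pow, ← (rightSingularBasis A).sum_sq_inner_right x,
    Finset.mul_sum]
  refine Finset.sum_le_sum fun i _ => ?_
  by_cases hi : i ∈ J
  · gcongr
    exact hJ i hi
  · simp [(rightSingularBasis A).inner_eq_zero_of_mem_span hx hi]

lemma mem_span_rightSingularBasis_univ (x : EuclideanSpace ℝ (Fin q)) :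
    x ∈ Submodule.span ℝ (rightSingularBasis A '' Set.univ) := by
  rw [Set.image_univ, ← OrthonormalBasis.coe_toBasis, Module.Basis.span_eq]
  trivial

lemma norm_toEuclideanLin_le_sv_one (x : EuclideanSpace ℝ (Fin q)) :
    ‖A.toEuclideanLin x‖ ≤ sv A 1 * ‖x‖ :=
  norm_toEuclideanLin_le_of_mem_span A (mem_span_rightSingularBasis_univ A x) (sv_nonneg A 1)
    fun i _ => svUnsorted_le_sv_one A i

lemma sv_card_mul_norm_le (x : EuclideanSpace ℝ (Fin q)) :
    sv A q * ‖x‖ ≤ ‖A.toEuclideanLin x‖ :=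
  le_norm_toEuclideanLin_of_mem_span A (mem_span_rightSingularBasis_univ A x) (sv_nonneg A q)
    fun i _ => sv_card_le_svUnsorted A i

lemma exists_norm_eq_one_norm_toEuclideanLin_eq_sv {k : ℕ} (hk : q - k < q) :
    ∃ x : EuclideanSpace ℝ (Fin q), ‖x‖ = 1 ∧ ‖A.toEuclideanLin x‖ = sv A k := by
  set i := Tuple.sort (svUnsorted A) ⟨q - k, hk⟩
  have hi : rightSingularBasis A i ∈ Submodule.span ℝ (rightSingularBasis A '' {i}) :=
    Submodule.subset_span ⟨i, rfl, rfl⟩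
  have hnorm : ‖rightSingularBasis A i‖ = 1 := (rightSingularBasis A).orthonormal.1 i
  refine ⟨rightSingularBasis A i, hnorm, le_antisymm ?_ ?_⟩
  · simpa [hnorm, sv_eq_svUnsorted_sort A hk] using
      norm_toEuclideanLin_le_of_mem_span A hi (svUnsorted_nonneg A i) (fun j hj => hj ▸ le_rfl)
  · simpa [hnorm, sv_eq_svUnsorted_sort A hk] using
      le_norm_toEuclideanLin_of_mem_span A hi (svUnsorted_nonneg A i) (fun j hj => hj ▸ le_rfl)

theorem sv_le_sv_add_sv_sub_one (A B : Matrix (Fin p) (Fin q) ℝ) {k : ℕ} (hk : k ≤ q) :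
    sv A k ≤ sv B k + sv (A - B) 1 := by
  rcases Nat.eq_zero_or_pos k with rfl | hk0
  · simpa [sv_zero_right] using sv_nonneg (A - B) 1
  have hqk : q - k < q := by omega
  let fA : Fin k → Fin q := fun t => Tuple.sort (svUnsorted A) ⟨q - k + t, by omega⟩
  let fB : Fin (q - k + 1) → Fin q := fun t => Tuple.sort (svUnsorted B) ⟨t, by omega⟩
  have hfA : Function.Injective fA := fun s t hst => by
    simpa [fA, Fin.ext_iff] using (Tuple.sort (svUnsorted A)).injective hst
  have hfB : Function.Injective fB := fun s t hst => by
    simpa [fB, Fin.ext_iff] using (Tuple.sort (svUnsorted B)).injective hst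
  -- `U` is spanned by right singular vectors of `A` for its `k` largest singular values, `W` by
  -- those of `B` for its `q - k + 1` smallest; their dimensions force a common nonzero vector.
  let U := Submodule.span ℝ (rightSingularBasis A '' Set.range fA)
  let W := Submodule.span ℝ (rightSingularBasis B '' Set.range fB)
  have hU := (rightSingularBasis A).finrank_span_image_range hfA
  have hW := (rightSingularBasis B).finrank_span_image_range hfB
  obtain ⟨x, hx, hx0⟩ := Submodule.exists_mem_inf_ne_zero_of_finrank_lt W U (by
    rw [finrank_euclideanSpace_fin, hU, hW, Fintype.card_fin, Fintype.card_fin]; omega)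
  have hAx : sv A k * ‖x‖ ≤ ‖A.toEuclideanLin x‖ :=
    le_norm_toEuclideanLin_of_mem_span A hx.2 (sv_nonneg A k) <| by
      rintro _ ⟨t, rfl⟩
      exact sv_le_svUnsorted_sort A hqk (by simp)
  have hBx : ‖B.toEuclideanLin x‖ ≤ sv B k * ‖x‖ :=
    norm_toEuclideanLin_le_of_mem_span B hx.1 (sv_nonneg B k) <| by
      rintro _ ⟨t, rfl⟩
      exact svUnsorted_sort_le_sv B hqk (by simpa using Nat.lt_succ_iff.1 t.isLt)
  have hABx : A.toEuclideanLin x - B.toEuclideanLin x = (A - B).toEuclideanLin x := by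
    rw [map_sub, LinearMap.sub_apply]
  refine le_of_mul_le_mul_right ?_ (norm_pos_iff.2 hx0)
  calc sv A k * ‖x‖ ≤ ‖A.toEuclideanLin x‖ := hAx
    _ ≤ ‖B.toEuclideanLin x‖ + ‖(A - B).toEuclideanLin x‖ := hABx ▸ norm_le_insert' _ _
    _ ≤ sv B k * ‖x‖ + sv (A - B) 1 * ‖x‖ :=
      add_le_add hBx (norm_toEuclideanLin_le_sv_one (A - B) x)
    _ = (sv B k + sv (A - B) 1) * ‖x‖ := by ring

lemma sv_one_submatrix_le {p' q' : ℕ} (A : Matrix (Fin p) (Fin q) ℝ) {e : Fin p' → Fin p}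
    {f : Fin q' → Fin q} (he : Function.Injective e) (hf : Function.Injective f) :
    sv (A.submatrix e f) 1 ≤ sv A 1 := by
  rcases Nat.eq_zero_or_pos q' with rfl | hq'
  · exact (dif_neg (by simp)).trans_le (sv_nonneg A 1)
  obtain ⟨x, hx, hAx⟩ := exists_norm_eq_one_norm_toEuclideanLin_eq_sv (A.submatrix e f)
    (k := 1) (by omega)
  let w : EuclideanSpace ℝ (Fin q) := WithLp.toLp 2 (Function.extend f x 0)
  have hrows : (A.submatrix e f).toEuclideanLin x =
      WithLp.toLp 2 fun i => A.toEuclideanLin w (e i) := by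
    rw [toLpLin_apply, submatrix_mulVec_eq_mulVec_extend A e hf]
    rfl
  calc sv (A.submatrix e f) 1 = ‖(A.submatrix e f).toEuclideanLin x‖ := hAx.symm
    _ ≤ ‖A.toEuclideanLin w‖ := hrows ▸ EuclideanSpace.norm_comp_le he _
    _ ≤ sv A 1 * ‖w‖ := norm_toEuclideanLin_le_sv_one A w
    _ = sv A 1 := by rw [EuclideanSpace.norm_extend_zero hf, hx, mul_one]

lemma sv_mul_sv_le_sv_mul {r : ℕ} (A : Matrix (Fin r) (Fin p) ℝ) (B : Matrix (Fin p) (Fin q) ℝ) :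
    sv A p * sv B q ≤ sv (A * B) q := by
  rcases Nat.eq_zero_or_pos q with rfl | hq
  · simp [sv_zero_right]
  obtain ⟨x, hx, hABx⟩ := exists_norm_eq_one_norm_toEuclideanLin_eq_sv (A * B) (k := q)
    (by omega)
  calc sv A p * sv B q = sv A p * (sv B q * ‖x‖) := by rw [hx, mul_one]
    _ ≤ sv A p * ‖B.toEuclideanLin x‖ := by
      gcongr
      exacts [sv_nonneg A p, sv_card_mul_norm_le B x]
    _ ≤ ‖A.toEuclideanLin (B.toEuclideanLin x)‖ := sv_card_mul_norm_le A _
    _ = sv (A * B) q := by rw [← hABx, toLpLin_mul]; rfl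

end SingularValues

theorem stmt4_general (m n s : ℕ)
    (M : Matrix (Fin (s + m)) (Fin (s + n)) ℝ)
    (G : Matrix (Fin (s + m)) (Fin s) ℝ) (S : Matrix (Fin s) (Fin (s + n)) ℝ)
    (es : ℝ) (hes : sv (M - G * S) 1 ≤ es)
    (GA : Matrix (Fin s) (Fin s) ℝ) (hGAdef : GA = G.submatrix (Fin.castAdd m) id)
    (SA : Matrix (Fin s) (Fin s) ℝ) (hSAdef : SA = S.submatrix id (Fin.castAdd n))
    (AM : Matrix (Fin s) (Fin s) ℝ)
    (hAMdef : AM = M.submatrix (Fin.castAdd m) (Fin.castAdd n))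
    (γ : ℝ) (hγ : 1 ≤ γ) (h2 : sv G s * sv S s = sv (G * S) s / γ)
    (β : ℝ) (hβ : 1 ≤ β) (h3G : sv G s / β ≤ sv GA s) (h3S : sv S s / β ≤ sv SA s) :
    (sv M s - es) / (β ^ 2 * γ) - es ≤ sv AM s := by
  have hM : sv M s ≤ sv (G * S) s + es :=
    (sv_le_sv_add_sv_sub_one M (G * S) (by omega)).trans (by gcongr)
  have hblock : GA * SA - AM = -(M - G * S).submatrix (Fin.castAdd m) (Fin.castAdd n) := by
    subst hGAdef hSAdef hAMdef
    ext i j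
    simp [Matrix.mul_apply]
  have hAM : sv (GA * SA) s ≤ sv AM s + es := by
    refine (sv_le_sv_add_sv_sub_one (GA * SA) AM le_rfl).trans ?_
    rw [hblock, sv_neg]
    gcongr
    exact (sv_one_submatrix_le _ (Fin.castAdd_injective s m) (Fin.castAdd_injective s n)).trans hes
  have hGS : sv (G * S) s / (β ^ 2 * γ) = sv G s / β * (sv S s / β) := by
    rw [div_mul_div_comm, h2]
    field_simp
  calc (sv M s - es) / (β ^ 2 * γ) - es ≤ sv (G * S) s / (β ^ 2 * γ) - es := by gcongr; linarith
    _ ≤ sv GA s * sv SA s - es := by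
      rw [hGS]
      gcongr
      exacts [div_nonneg (sv_nonneg S s) (by positivity), sv_nonneg GA s]
    _ ≤ sv (GA * SA) s - es := by gcongr; exact sv_mul_sv_le_sv_mul GA SA
    _ ≤ sv AM s := by linarith

/-- under assumptions (1)–(3) on the approximate rank-`s`
decomposition `M ≈ G * S`, the smallest singular value of the sample matrix
`A_M` satisfies `(σ_s(M) − e_s)/(β²γ) − e_s ≤ σ_s(A_M)`. -/
theorem stmt4 (m n s : ℕ) (hs : 1 ≤ s)
    (M : Matrix (Fin (s + m)) (Fin (s + n)) ℝ)
    (G : Matrix (Fin (s + m)) (Fin s) ℝ) (S : Matrix (Fin s) (Fin (s + n)) ℝ)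
    (es : ℝ) (hes : sv (M - G * S) 1 ≤ es)
    (GA : Matrix (Fin s) (Fin s) ℝ) (hGAdef : GA = G.submatrix (Fin.castAdd m) id)
    (SA : Matrix (Fin s) (Fin s) ℝ) (hSAdef : SA = S.submatrix id (Fin.castAdd n))
    (AM : Matrix (Fin s) (Fin s) ℝ)
    (hAMdef : AM = M.submatrix (Fin.castAdd m) (Fin.castAdd n))
    (h1 : 0 < sv (G * S) s)
    (γ : ℝ) (hγ : 1 ≤ γ) (h2 : sv G s * sv S s = sv (G * S) s / γ)
    (β : ℝ) (hβ : 1 ≤ β) (h3G : sv G s / β ≤ sv GA s) (h3S : sv S s / β ≤ sv SA s) :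
    (sv M s - es) / (β ^ 2 * γ) - es ≤ sv AM s :=
  stmt4_general m n s M G S es hes GA hGAdef SA hSAdef AM hAMdef γ hγ h2 β hβ h3G h3S
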